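/- Let Δ : ℝ → ℝ be given by Δ(k) = 2[cos k − cos(k/2)cosh(√3k/2) − √3 sin(k/2) sinh(√3k/2)]. Then every positive zero of Δ is simple: for every real k > 0 with Δ(k) = 0, the derivative Δ'(k) is nonzero. -/

import Mathlib

set_option maxHeartbeats 1000000

noncomputable def ΔR (k : ℝ) : ℝ :=
  2 * (Real.cos k - Real.cos (k / 2) * Real.cosh (Real.sqrt 3 * k / 2)
    - Real.sqrt 3 * Real.sin (k / 2) * Real.sinh (Real.sqrt 3 * k / 2))

lemma hasDerivAt_ΔR (k : ℝ) :
    HasDerivAt ΔR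
      (2 * (-Real.sin k - Real.sin (k / 2) * Real.cosh (Real.sqrt 3 * k / 2)
        - Real.sqrt 3 * Real.cos (k / 2) * Real.sinh (Real.sqrt 3 * k / 2))) k := by
  have h3 : Real.sqrt 3 ^ 2 = 3 := Real.sq_sqrt (by norm_num)
  have hhalf : HasDerivAt (fun x : ℝ => x / 2) (1 / 2) k := (hasDerivAt_id k).div_const 2
  have hlin : HasDerivAt (fun x : ℝ => Real.sqrt 3 * x / 2) (Real.sqrt 3 / 2) k := by
    simpa using ((hasDerivAt_id k).const_mul (Real.sqrt 3)).div_const 2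
  have hc : HasDerivAt (fun x : ℝ => Real.cos (x / 2)) (-Real.sin (k / 2) * (1 / 2)) k :=
    (Real.hasDerivAt_cos _).comp k hhalf
  have hs : HasDerivAt (fun x : ℝ => Real.sin (x / 2)) (Real.cos (k / 2) * (1 / 2)) k :=
    (Real.hasDerivAt_sin _).comp k hhalf
  have hC : HasDerivAt (fun x : ℝ => Real.cosh (Real.sqrt 3 * x / 2))
      (Real.sinh (Real.sqrt 3 * k / 2) * (Real.sqrt 3 / 2)) k :=
    (Real.hasDerivAt_cosh _).comp k hlin
  have hS : HasDerivAt (fun x : ℝ => Real.sinh (Real.sqrt 3 * x / 2))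
      (Real.cosh (Real.sqrt 3 * k / 2) * (Real.sqrt 3 / 2)) k :=
    (Real.hasDerivAt_sinh _).comp k hlin
  have hmain := (((Real.hasDerivAt_cos k).sub (hc.mul hC)).sub
      ((hs.mul hS).const_mul (Real.sqrt 3))).const_mul 2
  have heq : ΔR = fun x => 2 * (Real.cos x - Real.cos (x / 2) * Real.cosh (Real.sqrt 3 * x / 2)
      - Real.sqrt 3 * (Real.sin (x / 2) * Real.sinh (Real.sqrt 3 * x / 2))) := by
    funext x; unfold ΔR; ring
  rw [heq]
  refine hmain.congr_deriv (Eq.symm ?_)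
  linear_combination (Real.sin (k / 2) * Real.cosh (Real.sqrt 3 * k / 2)) * h3

theorem stmt_3 (k : ℝ) (hk : 0 < k) (h0 : ΔR k = 0) : deriv ΔR k ≠ 0 := by
  intro hder
  set s3 := Real.sqrt 3 with hs3def
  set s := Real.sin (k / 2) with hsdef
  set c := Real.cos (k / 2) with hcdef
  set S := Real.sinh (s3 * k / 2) with hSdef
  set C := Real.cosh (s3 * k / 2) with hCdef
  have h3 : s3 ^ 2 = 3 := Real.sq_sqrt (by norm_num)
  have hs3pos : 0 < s3 := Real.sqrt_pos.mpr (by norm_num)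
  have hs3lt : s3 < 1.8 := by nlinarith
  have hs3gt : 1.7 < s3 := by nlinarith
  have hS0 : 0 < S := Real.sinh_pos_iff.mpr (by positivity)
  have hC0 : 0 < C := Real.cosh_pos _
  have hcoshsq : C ^ 2 = S ^ 2 + 1 := Real.cosh_sq _
  have hpy : Real.sin k ^ 2 + Real.cos k ^ 2 = 1 := Real.sin_sq_add_cos_sq k
  have hpy2 : s ^ 2 + c ^ 2 = 1 := Real.sin_sq_add_cos_sq _
  have hsin2 : Real.sin k = 2 * s * c := by
    rw [hsdef, hcdef, ← Real.sin_two_mul]; congr 1; ring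
  have E1 : Real.cos k = c * C + s3 * s * S := by
    unfold ΔR at h0
    rw [← hs3def, ← hsdef, ← hcdef, ← hSdef, ← hCdef] at h0
    linarith
  have E2 : Real.sin k = -(s * C + s3 * c * S) := by
    have hd := (hasDerivAt_ΔR k).deriv
    rw [hder] at hd
    rw [← hs3def, ← hsdef, ← hcdef, ← hSdef, ← hCdef] at hd
    linarith
  have hz : S * (S + s3 * (s * c) * C) = 0 := by
    linear_combination (1/4) * hpy - (1/4) * (Real.cos k + c * C + s3 * s * S) * E1
      - (1/4) * (Real.sin k - (s * C + s3 * c * S)) * E2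
      - (1/4) * (s ^ 2 + c ^ 2) * S ^ 2 * h3
      - (1/4) * (C ^ 2 + 3 * S ^ 2) * hpy2 - (1/4) * hcoshsq
  have hkey : S + s3 * (s * c) * C = 0 := by
    rcases mul_eq_zero.mp hz with h | h
    · exact absurd h (ne_of_gt hS0)
    · exact h
  have hs3C : 0 < s3 * C := mul_pos hs3pos hC0
  have hsc : s * c < 0 := by nlinarith
  have hsinneg : Real.sin k < 0 := by rw [hsin2]; nlinarith
  have hkpi : Real.pi < k := by
    by_contra h
    push_neg at h
    exact absurd (Real.sin_nonneg_of_nonneg_of_le_pi hk.le h) (not_le.mpr hsinneg)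
  have hsin_lb : -1 ≤ Real.sin k := Real.neg_one_le_sin k
  have h2S : 2 * S ≤ s3 * C := by nlinarith
  have hx5 : 5.3 < s3 * k := by
    have hpi : (3.141592 : ℝ) < Real.pi := Real.pi_gt_d6
    nlinarith
  have hexp : 140 < Real.exp (s3 * k) := by
    have h5 : Real.exp 5 < Real.exp (s3 * k) := Real.exp_lt_exp.mpr (by linarith)
    have h1 : (2.7182818283 : ℝ) < Real.exp 1 := Real.exp_one_gt_d9
    have h15 : Real.exp 1 ^ (5 : ℕ) = Real.exp ((5 : ℕ) : ℝ) := Real.exp_one_pow 5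
    have hle : (2.7182818283 : ℝ) ^ (5 : ℕ) ≤ Real.exp 1 ^ (5 : ℕ) :=
      pow_le_pow_left₀ (by norm_num) h1.le 5
    have h27 : (140 : ℝ) < (2.7182818283 : ℝ) ^ (5 : ℕ) := by norm_num
    have h55 : ((5 : ℕ) : ℝ) = (5 : ℝ) := by norm_num
    rw [h55] at h15
    linarith
  have hgt : s3 * C < 2 * S := by
    have hE : 0 < Real.exp (s3 * k / 2) := Real.exp_pos _
    have hEE : Real.exp (s3 * k / 2) * Real.exp (s3 * k / 2) = Real.exp (s3 * k) := by
      rw [← Real.exp_add]; congr 1; ring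
    have hstep : 0 < (2 - s3) * Real.exp (s3 * k) - (2 + s3) := by nlinarith [hexp, hs3lt, hs3gt]
    have hiden : (2 - s3) * Real.exp (s3 * k / 2) - (2 + s3) * (Real.exp (s3 * k / 2))⁻¹
        = ((2 - s3) * (Real.exp (s3 * k / 2) * Real.exp (s3 * k / 2)) - (2 + s3))
          / Real.exp (s3 * k / 2) := by
      field_simp
    have hpos : 0 < (2 - s3) * Real.exp (s3 * k / 2) - (2 + s3) * (Real.exp (s3 * k / 2))⁻¹ := by
      rw [hiden, hEE]; exact div_pos hstep hE
    rw [hSdef, hCdef, Real.sinh_eq, Real.cosh_eq, Real.exp_neg]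
    nlinarith [hpos]
  linarith
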